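/- arXiv:1109.4322 — 4 statements merged into one kernel-verified Lean document; each statement's English description precedes it below -/
import Mathlib

section
/- Let T be a minimal continuous map on a compact metrizable space X and let f : X → ℝ be continuous. If there exist x₀ ∈ X and M ∈ ℝ such that |∑_{i=0}^{n} f(Tⁱ x₀)| ≤ M for all n ∈ ℕ, then there exists a continuous function g : X → ℝ such that f(x) = g(x) - g(T x) for all x ∈ X (Gottschalk–Hedlund theorem). -/
/-!
Lift `T` to the skew product `F (x, t) = (T x, t + f x)` on `X × ℝ`. Bounded Birkhoff sums make
the forward orbit closure of a point compact, so it contains a minimal closed `F`-invariant set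
`K`. Since `F` commutes with vertical translations, minimality forces `K` to meet each fibre in a
single point, and minimality of `T` forces it to meet every fibre; hence `K` is the graph of a
function `g`, continuous because `K` is compact, and invariance of the graph reads
`g (T x) = g x + f x`.
-/

open Set Function

section MinimalSet

variable {α : Type*} [TopologicalSpace α]

def IsMinimalSet (F : α → α) (K : Set α) : Prop :=
  Minimal (fun L : Set α => L.Nonempty ∧ IsClosed L ∧ MapsTo F L L) K

theorem IsCompact.exists_isMinimalSet_subset {F : α → α} {C : Set α} (hC : IsCompact C)
    (hCcl : IsClosed C) (hCne : C.Nonempty) (hCinv : MapsTo F C C) :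
    ∃ K ⊆ C, IsMinimalSet F K := by
  let S : Set (Set α) := {K | K ⊆ C ∧ K.Nonempty ∧ IsClosed K ∧ MapsTo F K K}
  have hchain : ∀ c ⊆ S, IsChain (· ⊆ ·) c → c.Nonempty → ∃ lb ∈ S, ∀ s ∈ c, lb ⊆ s := by
    intro c hcS hc ⟨U₀, hU₀⟩
    have : Nonempty c := ⟨⟨U₀, hU₀⟩⟩
    refine ⟨⋂₀ c, ⟨(sInter_subset_of_mem hU₀).trans (hcS hU₀).1, ?_,
      isClosed_sInter fun U hU => (hcS hU).2.2.1,
      fun p hp U hU => (hcS hU).2.2.2 (hp U hU)⟩, fun U hU => sInter_subset_of_mem hU⟩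
    exact IsCompact.nonempty_sInter_of_directed_nonempty_isCompact_isClosed
      (hc.symm.directedOn (r := fun U V : Set α => U ⊇ V)) (fun U hU => (hcS hU).2.1)
      (fun U hU => hC.of_isClosed_subset (hcS hU).2.2.1 (hcS hU).1) (fun U hU => (hcS hU).2.2.1)
  obtain ⟨K, hKC, hK⟩ := zorn_superset_nonempty S hchain C ⟨Subset.rfl, hCne, hCcl, hCinv⟩
  exact ⟨K, hKC, hK.prop.2, fun L hL hLK => hK.2 ⟨hLK.trans hKC, hL⟩ hLK⟩

theorem mapsTo_closure_range_iterate {F : α → α} (hF : Continuous F) (p : α) :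
    MapsTo F (closure (range fun n : ℕ => F^[n] p)) (closure (range fun n : ℕ => F^[n] p)) := by
  refine MapsTo.closure ?_ hF
  rintro _ ⟨n, rfl⟩
  exact ⟨n + 1, iterate_succ_apply' F n p⟩

theorem eq_univ_of_forall_dense_range_iterate {T : α → α}
    (hmin : ∀ x, Dense (range fun n : ℕ => T^[n] x)) {A : Set α} (hA : IsClosed A)
    (hAne : A.Nonempty) (hAinv : MapsTo T A A) : A = univ := by
  obtain ⟨a, ha⟩ := hAne
  have horbit : (range fun n : ℕ => T^[n] a) ⊆ A := by
    rintro _ ⟨n, rfl⟩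
    exact hAinv.iterate n ha
  rw [← hA.closure_eq, ((hmin a).mono horbit).closure_eq]

end MinimalSet

theorem exists_continuous_of_isCompact_graph {X Y : Type*} [TopologicalSpace X] [T2Space X]
    [TopologicalSpace Y] {K : Set (X × Y)} (hK : IsCompact K) (hgraph : ∀ x, ∃! y, (x, y) ∈ K) :
    ∃ g : X → Y, Continuous g ∧ ∀ x, (x, g x) ∈ K := by
  choose g hgK hguniq using hgraph
  refine ⟨g, continuous_iff_isClosed.mpr fun A hA => ?_, hgK⟩
  have hpre : g ⁻¹' A = Prod.fst '' (K ∩ Prod.snd ⁻¹' A) := by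
    ext x
    constructor
    · exact fun hx => ⟨(x, g x), ⟨hgK x, hx⟩, rfl⟩
    · rintro ⟨⟨x, y⟩, ⟨hxy, hy⟩, rfl⟩
      rwa [mem_preimage, ← hguniq x y hxy]
  rw [hpre]
  exact ((hK.inter_right (hA.preimage continuous_snd)).image continuous_fst).isClosed

section SkewProduct

variable {X : Type*} {T : X → X} {f : X → ℝ}

def skewProduct (T : X → X) (f : X → ℝ) (p : X × ℝ) : X × ℝ :=
  (T p.1, p.2 + f p.1)

theorem skewProduct_iterate (n : ℕ) (x : X) (t : ℝ) :
    (skewProduct T f)^[n] (x, t) = (T^[n] x, t + ∑ i ∈ Finset.range n, f (T^[i] x)) := by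
  induction n with
  | zero => simp
  | succ n ih =>
    rw [iterate_succ_apply', ih, iterate_succ_apply', Finset.sum_range_succ, ← add_assoc]
    rfl

theorem continuous_skewProduct [TopologicalSpace X] (hT : Continuous T) (hf : Continuous f) :
    Continuous (skewProduct T f) :=
  (hT.comp continuous_fst).prodMk (continuous_snd.add (hf.comp continuous_fst))

/-- `F` commutes with `τ : (x, t) ↦ (x, t - (s - t))`, so `K ∩ τ⁻¹ K` is closed, invariant and
contains `(x, s)`; minimality gives `K ⊆ τ⁻¹ K`, and at the lowest point of `K` this forces
`s ≤ t`. -/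
theorem IsMinimalSet.snd_le_of_mem [TopologicalSpace X] {K : Set (X × ℝ)}
    (hK : IsMinimalSet (skewProduct T f) K) (hKc : IsCompact K) {x : X} {t s : ℝ}
    (ht : (x, t) ∈ K) (hs : (x, s) ∈ K) : s ≤ t := by
  obtain ⟨-, hKcl, hKinv⟩ := hK.prop
  let τ : X × ℝ → X × ℝ := fun p => (p.1, p.2 - (s - t))
  have hτ : Continuous τ := continuous_fst.prodMk (continuous_snd.sub continuous_const)
  have hL : (K ∩ τ ⁻¹' K).Nonempty ∧ IsClosed (K ∩ τ ⁻¹' K) ∧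
      MapsTo (skewProduct T f) (K ∩ τ ⁻¹' K) (K ∩ τ ⁻¹' K) := by
    refine ⟨⟨(x, s), hs, by simpa [τ] using ht⟩, hKcl.inter (hKcl.preimage hτ), ?_⟩
    rintro p ⟨hp, hτp⟩
    have hcomm : τ (skewProduct T f p) = skewProduct T f (τ p) :=
      Prod.ext rfl (by simp only [τ, skewProduct]; ring)
    refine ⟨hKinv hp, ?_⟩
    rw [mem_preimage, hcomm]
    exact hKinv hτp
  have hKτ : K ⊆ τ ⁻¹' K := (hK.2 hL inter_subset_left).trans inter_subset_right
  obtain ⟨p, hp, hpmin⟩ := hKc.exists_isMinOn ⟨_, ht⟩ continuous_snd.continuousOn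
  have : p.2 ≤ p.2 - (s - t) := hpmin (hKτ hp)
  linarith

theorem IsMinimalSet.exists_continuous_graph [TopologicalSpace X] [T2Space X]
    (hmin : ∀ x, Dense (range fun n : ℕ => T^[n] x)) {K : Set (X × ℝ)}
    (hK : IsMinimalSet (skewProduct T f) K) (hKc : IsCompact K) :
    ∃ g : X → ℝ, Continuous g ∧ ∀ x, g (T x) = g x + f x := by
  obtain ⟨hKne, -, hKinv⟩ := hK.prop
  have hfst : Prod.fst '' K = univ := by
    refine eq_univ_of_forall_dense_range_iterate hmin (hKc.image continuous_fst).isClosed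
      (hKne.image _) ?_
    rintro _ ⟨p, hp, rfl⟩
    exact ⟨_, hKinv hp, rfl⟩
  have hgraph : ∀ x, ∃! t, (x, t) ∈ K := by
    intro x
    obtain ⟨⟨x, t⟩, ht, rfl⟩ := hfst.symm ▸ mem_univ x
    exact ⟨t, ht, fun s hs => le_antisymm (hK.snd_le_of_mem hKc ht hs)
      (hK.snd_le_of_mem hKc hs ht)⟩
  obtain ⟨g, hg, hgK⟩ := exists_continuous_of_isCompact_graph hKc hgraph
  exact ⟨g, hg, fun x => (hgraph (T x)).unique (hgK (T x)) (hKinv (hgK x))⟩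

end SkewProduct

theorem gottschalk_hedlund_general
    {X : Type*} [MetricSpace X] [CompactSpace X]
    (T : X → X) (hT : Continuous T)
    (hmin : ∀ x : X, Dense (Set.range fun n : ℕ => T^[n] x))
    (f : X → ℝ) (hf : Continuous f)
    (h : ∃ (x₀ : X) (M : ℝ), ∀ n : ℕ,
      |∑ i ∈ Finset.range (n + 1), f (T^[i] x₀)| ≤ M) :
    ∃ g : X → ℝ, Continuous g ∧ ∀ x, f x = g x - g (T x) := by
  obtain ⟨x₀, M, hM⟩ := h
  set F := skewProduct T f
  -- start at `F (x₀, 0)` so that the orbit only sees the sums bounded by `hM`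
  set C := closure (range fun n : ℕ => F^[n] (F (x₀, 0)))
  have hCbdd : C ⊆ univ ×ˢ Icc (-M) M := by
    refine closure_minimal ?_ (isClosed_univ.prod isClosed_Icc)
    rintro _ ⟨n, rfl⟩
    show F^[n] (F (x₀, 0)) ∈ _
    rw [← iterate_succ_apply F, skewProduct_iterate, zero_add]
    exact ⟨trivial, abs_le.mp (hM n)⟩
  have hC : IsCompact C :=
    (isCompact_univ.prod isCompact_Icc).of_isClosed_subset isClosed_closure hCbdd
  obtain ⟨K, hKC, hK⟩ := hC.exists_isMinimalSet_subset isClosed_closure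
    ⟨_, subset_closure (mem_range_self 0)⟩ (mapsTo_closure_range_iterate
      (continuous_skewProduct hT hf) _)
  obtain ⟨g, hg, hgT⟩ := hK.exists_continuous_graph hmin (hC.of_isClosed_subset hK.prop.2.1 hKC)
  exact ⟨-g, hg.neg, fun x => by simp only [Pi.neg_apply, hgT]; ring⟩

/-- Gottschalk–Hedlund theorem: if `T` is a minimal continuous map on a nonempty compact
metrizable space and the Birkhoff sums of a continuous `f : X → ℝ` are bounded at some
point `x₀`, then `f` is a continuous coboundary. -/
theorem gottschalk_hedlund
    {X : Type*} [MetricSpace X] [CompactSpace X] [Nonempty X]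
    (T : X → X) (hT : Continuous T)
    (hmin : ∀ x : X, Dense (Set.range fun n : ℕ => T^[n] x))
    (f : X → ℝ) (hf : Continuous f)
    (h : ∃ (x₀ : X) (M : ℝ), ∀ n : ℕ,
      |∑ i ∈ Finset.range (n + 1), f (T^[i] x₀)| ≤ M) :
    ∃ g : X → ℝ, Continuous g ∧ ∀ x, f x = g x - g (T x) :=
  gottschalk_hedlund_general T hT hmin f hf h
end

section
/- Let T be a minimal continuous map on a compact metrizable space X and f : X → ℝ continuous. If there exist x₀ ∈ X and M with |∑_{i=0}^{n} f(Tⁱ x₀)| ≤ M for all n, then the same bound-type conclusion holds uniformly: there exists M' such that |∑_{i=0}^{n} f(Tⁱ x)| ≤ M' for all x ∈ X and all n ∈ ℕ. -/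
/-- For a minimal continuous map on a nonempty compact metrizable space, if the Birkhoff
sums of a continuous `f : X → ℝ` are bounded at one point, they are uniformly bounded. -/
theorem birkhoff_sums_uniformly_bounded_of_bounded_at_point
    {X : Type*} [MetricSpace X] [CompactSpace X] [Nonempty X]
    (T : X → X) (hT : Continuous T)
    (hmin : ∀ x : X, Dense (Set.range fun n : ℕ => T^[n] x))
    (f : X → ℝ) (hf : Continuous f)
    (h : ∃ (x₀ : X) (M : ℝ), ∀ n : ℕ,
      |∑ i ∈ Finset.range (n + 1), f (T^[i] x₀)| ≤ M) :
    ∃ M' : ℝ, ∀ (x : X) (n : ℕ),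
      |∑ i ∈ Finset.range (n + 1), f (T^[i] x)| ≤ M' := by
  obtain ⟨x₀, M, hM⟩ := h
  have hM0 : 0 ≤ M := le_trans (abs_nonneg _) (hM 0)
  refine ⟨2 * M, fun x n => ?_⟩
  -- bound on the orbit of x₀
  have horb : ∀ k : ℕ, |∑ i ∈ Finset.range (n + 1), f (T^[i] (T^[k] x₀))| ≤ 2 * M := by
    intro k
    have h1 : ∑ i ∈ Finset.range (k + (n + 1)), f (T^[i] x₀)
        = (∑ i ∈ Finset.range k, f (T^[i] x₀))
          + ∑ i ∈ Finset.range (n + 1), f (T^[i] (T^[k] x₀)) := by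
      rw [Finset.sum_range_add]
      congr 1
      refine Finset.sum_congr rfl fun i _ => ?_
      rw [add_comm k i, Function.iterate_add_apply]
    have h2 : ∑ i ∈ Finset.range (n + 1), f (T^[i] (T^[k] x₀))
        = (∑ i ∈ Finset.range (k + (n + 1)), f (T^[i] x₀))
          - ∑ i ∈ Finset.range k, f (T^[i] x₀) := by
      rw [h1]; ring
    rw [h2]
    have hA : |∑ i ∈ Finset.range (k + (n + 1)), f (T^[i] x₀)| ≤ M := by
      have := hM (k + n)
      have hk : k + n + 1 = k + (n + 1) := by ring
      rwa [hk] at this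
    have hB : |∑ i ∈ Finset.range k, f (T^[i] x₀)| ≤ M := by
      cases k with
      | zero => simpa using hM0
      | succ m => exact hM m
    calc |_ - _| ≤ |∑ i ∈ Finset.range (k + (n + 1)), f (T^[i] x₀)|
          + |∑ i ∈ Finset.range k, f (T^[i] x₀)| := abs_sub _ _
      _ ≤ M + M := add_le_add hA hB
      _ = 2 * M := by ring
  -- extend to all x by continuity and density
  have hcont : Continuous fun y : X => |∑ i ∈ Finset.range (n + 1), f (T^[i] y)| := by
    apply Continuous.abs
    exact continuous_finset_sum _ fun i _ => hf.comp (hT.iterate i)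
  have hclosed : IsClosed {y : X | |∑ i ∈ Finset.range (n + 1), f (T^[i] y)| ≤ 2 * M} :=
    isClosed_le hcont continuous_const
  have hsub : Set.range (fun k : ℕ => T^[k] x₀)
      ⊆ {y : X | |∑ i ∈ Finset.range (n + 1), f (T^[i] y)| ≤ 2 * M} := by
    rintro _ ⟨k, rfl⟩
    exact horb k
  have hx : x ∈ closure (Set.range fun k : ℕ => T^[k] x₀) := (hmin x₀).closure_eq ▸ trivial
  exact closure_minimal hsub hclosed hx
end

section
/- Let H be a Hilbert space, L : G → U(H) a unitary representation of a group G, and b : G → H a cocycle (b(gh) = b(g) + L(g)b(h)). Then b is bounded if and only if b is a coboundary, i.e., there exists v ∈ H such that b(g) = v − L(g)v for all g. -/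
open Filter Topology

set_option maxHeartbeats 2000000 in
/-- A cocycle `b : G → H` for an isometric representation `L` of a group `G` on a Hilbert
space `H` is bounded if and only if it is a coboundary. -/
theorem cocycle_bounded_iff_coboundary
    {G H : Type*} [Group G] [NormedAddCommGroup H] [InnerProductSpace ℝ H]
    [CompleteSpace H]
    (L : G →* (H ≃ₗᵢ[ℝ] H)) (b : G → H)
    (hcocycle : ∀ g h : G, b (g * h) = b g + L g (b h)) :
    (∃ M : ℝ, ∀ g : G, ‖b g‖ ≤ M) ↔ (∃ v : H, ∀ g : G, b g = v - L g v) := by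
  constructor
  · rintro ⟨M, hM⟩
    have hb1 : b 1 = 0 := by
      have h := hcocycle 1 1
      simp only [one_mul, map_one, LinearIsometryEquiv.coe_one, id_eq] at h
      have : b 1 + b 1 = b 1 + 0 := by rw [add_zero]; exact h.symm
      exact (add_left_cancel this)
    -- boundedness of the distance function to the orbit
    have hM0 : ∀ x : H, BddAbove (Set.range fun g : G => ‖x - b g‖) := by
      intro x
      refine ⟨‖x‖ + M, ?_⟩
      rintro _ ⟨g, rfl⟩
      calc ‖x - b g‖ ≤ ‖x‖ + ‖b g‖ := norm_sub_le _ _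
        _ ≤ ‖x‖ + M := by linarith [hM g]
    set r : H → ℝ := fun x => ⨆ g : G, ‖x - b g‖ with hrdef
    have hrge : ∀ x g, ‖x - b g‖ ≤ r x := fun x g => le_ciSup (hM0 x) g
    have hr0 : ∀ x, 0 ≤ r x := fun x => le_trans (norm_nonneg _) (hrge x 1)
    have hbdd_below : BddBelow (Set.range r) := ⟨0, by rintro _ ⟨x, rfl⟩; exact hr0 x⟩
    set R : ℝ := ⨅ x : H, r x with hRdef
    have hRle : ∀ x, R ≤ r x := fun x => ciInf_le hbdd_below x
    have hR0 : 0 ≤ R := le_ciInf hr0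
    -- key parallelogram inequality
    have key : ∀ x y : H, ‖x - y‖ ^ 2 / 2 ≤ r x ^ 2 + r y ^ 2 - 2 * R ^ 2 := by
      intro x y
      set m : H := (2 : ℝ)⁻¹ • (x + y) with hm
      have par : ∀ g : G,
          2 * ‖m - b g‖ ^ 2 = ‖x - b g‖ ^ 2 + ‖y - b g‖ ^ 2 - ‖x - y‖ ^ 2 / 2 := by
        intro g
        have hpl := parallelogram_law_with_norm ℝ (x - b g) (y - b g)
        have hsum : x - b g + (y - b g) = (2 : ℝ) • (m - b g) := by
          rw [hm]; module
        have hdiff : x - b g - (y - b g) = x - y := by abel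
        rw [hsum, hdiff, norm_smul] at hpl
        simp only [Real.norm_ofNat] at hpl
        nlinarith [hpl]
      have hC : ∀ g : G, ‖m - b g‖ ^ 2 ≤ (r x ^ 2 + r y ^ 2 - ‖x - y‖ ^ 2 / 2) / 2 := by
        intro g
        have h1 := hrge x g
        have h2 := hrge y g
        have h3 := par g
        nlinarith [norm_nonneg (x - b g), norm_nonneg (y - b g)]
      have hCnonneg : 0 ≤ (r x ^ 2 + r y ^ 2 - ‖x - y‖ ^ 2 / 2) / 2 :=
        le_trans (sq_nonneg _) (hC 1)
      have hrm : r m ^ 2 ≤ (r x ^ 2 + r y ^ 2 - ‖x - y‖ ^ 2 / 2) / 2 := by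
        have hle : r m ≤ Real.sqrt ((r x ^ 2 + r y ^ 2 - ‖x - y‖ ^ 2 / 2) / 2) := by
          apply ciSup_le
          intro g
          rw [← Real.sqrt_sq (norm_nonneg (m - b g))]
          exact Real.sqrt_le_sqrt (hC g)
        calc r m ^ 2 ≤ Real.sqrt ((r x ^ 2 + r y ^ 2 - ‖x - y‖ ^ 2 / 2) / 2) ^ 2 := by
              exact pow_le_pow_left₀ (hr0 m) hle 2
          _ = (r x ^ 2 + r y ^ 2 - ‖x - y‖ ^ 2 / 2) / 2 := Real.sq_sqrt hCnonneg
      have hRm := hRle m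
      nlinarith
    -- construct a minimizing sequence
    have hseq : ∀ n : ℕ, ∃ x : H, r x < R + 1 / (n + 1) := by
      intro n
      have hlt : R < R + 1 / (n + 1) := by
        have : (0 : ℝ) < 1 / (n + 1) := by positivity
        linarith
      exact exists_lt_of_ciInf_lt hlt
    choose u hu using hseq
    -- the minimizing sequence is Cauchy
    have hcauchy : CauchySeq u := by
      rw [Metric.cauchySeq_iff']
      intro ε hε
      -- choose N with 8*R/(N+1) + 4/(N+1)^2 < ε^2 ... i.e. 1/(N+1) small
      obtain ⟨N, hN⟩ := exists_nat_gt ((8 * R + 4) / (ε ^ 2 / 2))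
      refine ⟨N, fun n hn => ?_⟩
      have hNpos : (0 : ℝ) < N + 1 := by positivity
      have hsmall : (1 : ℝ) / (N + 1) ≤ 1 := by
        rw [div_le_one hNpos]; linarith
      have hsmall' : (8 * R + 4) / (ε ^ 2 / 2) < N + 1 := by linarith
      have hiN : (8 * R + 4) * (1 / (N + 1)) < ε ^ 2 / 2 := by
        rw [div_lt_iff₀ (by positivity)] at hsmall'
        rw [mul_one_div, div_lt_iff₀ hNpos]
        nlinarith [sq_nonneg ε, hε]
      have hmono : (1 : ℝ) / (n + 1) ≤ 1 / (N + 1) := by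
        apply one_div_le_one_div_of_le hNpos
        have : (N : ℝ) ≤ n := Nat.cast_le.mpr hn
        linarith
      have h1 := hu n
      have h2 := hu N
      have hk := key (u n) (u N)
      have hrn0 := hr0 (u n)
      have hrN0 := hr0 (u N)
      have hnormsq : ‖u n - u N‖ ^ 2 < ε ^ 2 := by
        have e1 : (0 : ℝ) < 1 / (N + 1) := by positivity
        have e2 : (0 : ℝ) < 1 / (n + 1) := by positivity
        nlinarith
      rw [dist_eq_norm]
      nlinarith [norm_nonneg (u n - u N), sq_nonneg (‖u n - u N‖ - ε), hε]
    obtain ⟨v, hv⟩ := cauchySeq_tendsto_of_complete hcauchy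
    -- r is 1-Lipschitz
    have hlip : ∀ x y : H, r x ≤ r y + ‖x - y‖ := by
      intro x y
      apply ciSup_le
      intro g
      calc ‖x - b g‖ ≤ ‖y - b g‖ + ‖x - y‖ := by
            have : x - b g = (y - b g) + (x - y) := by abel
            rw [this]; exact norm_add_le _ _
        _ ≤ r y + ‖x - y‖ := by linarith [hrge y g]
    -- r v = R
    have hrv : r v = R := by
      have hle : r v ≤ R := by
        have htend : Tendsto (fun n : ℕ => R + 1 / (n + 1) + ‖v - u n‖) atTop (𝓝 R) := by
          have h1 : Tendsto (fun n : ℕ => (1 : ℝ) / (n + 1)) atTop (𝓝 0) :=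
            tendsto_one_div_add_atTop_nhds_zero_nat
          have h2 : Tendsto (fun n : ℕ => ‖v - u n‖) atTop (𝓝 0) := by
            have := (tendsto_iff_norm_sub_tendsto_zero.mp hv)
            simpa [norm_sub_rev] using this
          have h3 : Tendsto (fun n : ℕ => R + (1 / (↑n + 1) + ‖v - u n‖)) atTop (𝓝 R) := by
            simpa using (tendsto_const_nhds (x := R) (f := (atTop : Filter ℕ))).add (h1.add h2)
          exact h3.congr fun n => by ring
        apply ge_of_tendsto htend
        filter_upwards with n
        calc r v ≤ r (u n) + ‖v - u n‖ := hlip v (u n)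
          _ ≤ R + 1 / (n + 1) + ‖v - u n‖ := by linarith [hu n]
      exact le_antisymm hle (hRle v)
    -- invariance : r (b g + L g v) = r v  for any point, via reindexing
    have hinv : ∀ (g : G) (x : H), r (b g + L g x) = r x := by
      intro g x
      have hrange : (Set.range fun h : G => ‖b g + L g x - b h‖)
          = Set.range fun h : G => ‖x - b h‖ := by
        ext c
        constructor
        · rintro ⟨h, rfl⟩
          refine ⟨g⁻¹ * h, ?_⟩
          show ‖x - b (g⁻¹ * h)‖ = ‖b g + L g x - b h‖
          have hb : b h = b g + L g (b (g⁻¹ * h)) := by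
            have h2 := hcocycle g (g⁻¹ * h)
            rwa [mul_inv_cancel_left] at h2
          rw [hb]
          have h3 : b g + L g x - (b g + L g (b (g⁻¹ * h))) = L g (x - b (g⁻¹ * h)) := by
            rw [map_sub]; abel
          rw [h3, (L g).norm_map]
        · rintro ⟨h, rfl⟩
          refine ⟨g * h, ?_⟩
          show ‖b g + L g x - b (g * h)‖ = ‖x - b h‖
          rw [hcocycle g h]
          have h3 : b g + L g x - (b g + L g (b h)) = L g (x - b h) := by
            rw [map_sub]; abel
          rw [h3, (L g).norm_map]
      have hsup : (⨆ h : G, ‖b g + L g x - b h‖) = ⨆ h : G, ‖x - b h‖ := by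
        rw [← sSup_range, ← sSup_range, hrange]
      simpa [hrdef] using hsup
    -- conclude
    refine ⟨v, fun g => ?_⟩
    have h1 : r (b g + L g v) = R := by rw [hinv g v, hrv]
    have h2 := key v (b g + L g v)
    rw [hrv, h1] at h2
    have h3 : ‖v - (b g + L g v)‖ ^ 2 ≤ 0 := by nlinarith
    have h4 : v - (b g + L g v) = 0 := by
      have := norm_nonneg (v - (b g + L g v))
      have h5 : ‖v - (b g + L g v)‖ = 0 := by nlinarith
      exact norm_eq_zero.mp h5
    have h6 : b g + L g v = v := (sub_eq_zero.mp h4).symm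
    exact (eq_sub_of_add_eq h6)
  · rintro ⟨v, hv⟩
    refine ⟨2 * ‖v‖, fun g => ?_⟩
    rw [hv g]
    calc ‖v - L g v‖ ≤ ‖v‖ + ‖L g v‖ := norm_sub_le _ _
      _ = 2 * ‖v‖ := by rw [(L g).norm_map]; ring
end

section
/- Let H be a separable Hilbert space, X a compact metrizable space, and f : X → H a weakly continuous function. Then the set of points of norm-continuity of f is a dense Gδ subset of X. -/
/-!
A weakly continuous `f` is the pointwise norm limit of the continuous maps `x ↦ P n (f x)`,
where `P n` are the orthogonal projections onto an increasing sequence of finite-dimensional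
subspaces with dense union (finite rank is what makes weak continuity enough). By Baire's
theorem, the continuity points of a pointwise limit of continuous maps are dense: for each
`ε`, the closed sets where `g m` stays `ε`-close to `g N` for all `m ≥ N` cover `X`, so their
interiors have dense union, and on such an interior `f` is a uniform `ε`-perturbation of the
continuous `g N`.
-/

open scoped InnerProductSpace
open Filter Topology Set

section PointwiseLimit

variable {X Y : Type*} [MetricSpace Y] {f : X → Y} {g : ℕ → X → Y}

lemma isClosed_setOf_forall_ge_dist_le [TopologicalSpace X] (hg : ∀ n, Continuous (g n))
    (ε : ℝ) (N : ℕ) :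
    IsClosed {x | ∀ m ≥ N, dist (g m x) (g N x) ≤ ε} := by
  simp only [ofPred_forall]
  exact isClosed_iInter fun m => isClosed_iInter fun _ =>
    isClosed_le ((hg m).dist (hg N)) continuous_const

lemma iUnion_setOf_forall_ge_dist_le_eq_univ (hlim : ∀ x, Tendsto (g · x) atTop (𝓝 (f x)))
    {ε : ℝ} (hε : 0 < ε) : ⋃ N, {x | ∀ m ≥ N, dist (g m x) (g N x) ≤ ε} = univ := by
  refine eq_univ_of_forall fun x => mem_iUnion.2 ?_
  obtain ⟨N, hN⟩ := Metric.cauchySeq_iff'.1 (hlim x).cauchySeq ε hε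
  exact ⟨N, fun m hm => (hN m hm).le⟩

lemma dist_le_of_forall_ge_dist_le {x : X} {ε : ℝ} {N : ℕ}
    (hlim : Tendsto (g · x) atTop (𝓝 (f x))) (h : ∀ m ≥ N, dist (g m x) (g N x) ≤ ε) :
    dist (f x) (g N x) ≤ ε :=
  le_of_tendsto (hlim.dist tendsto_const_nhds) (eventually_atTop.2 ⟨N, h⟩)

lemma dense_setOf_continuousAt_of_tendsto [TopologicalSpace X] [BaireSpace X]
    (hg : ∀ n, Continuous (g n)) (hlim : ∀ x, Tendsto (g · x) atTop (𝓝 (f x))) :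
    Dense {x | ContinuousAt f x} := by
  set A : ℝ → ℕ → Set X := fun ε N => {x | ∀ m ≥ N, dist (g m x) (g N x) ≤ ε}
  have hdense (n : ℕ) : Dense (⋃ N, interior (A (1 / (n + 1)) N)) :=
    dense_iUnion_interior_of_closed (isClosed_setOf_forall_ge_dist_le hg _)
      (iUnion_setOf_forall_ge_dist_le_eq_univ hlim Nat.one_div_pos_of_nat)
  refine (dense_iInter_of_isOpen_nat (fun n => isOpen_iUnion fun N => isOpen_interior)
    hdense).mono fun x hx => ?_
  refine continuousAt_of_locally_uniform_approx_of_continuousAt fun u hu => ?_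
  obtain ⟨ε, hε, hεu⟩ := Metric.mem_uniformity_dist.1 hu
  obtain ⟨n, hn⟩ := exists_nat_one_div_lt hε
  obtain ⟨N, hN⟩ := mem_iUnion.1 (mem_iInter.1 hx n)
  refine ⟨_, isOpen_interior.mem_nhds hN, g N, (hg N).continuousAt, fun y hy => hεu ?_⟩
  exact (dist_le_of_forall_ge_dist_le (hlim y) (interior_subset hy)).trans_lt hn

end PointwiseLimit

section FiniteRankApproximation

variable {𝕜 H : Type*} [RCLike 𝕜] [NormedAddCommGroup H] [InnerProductSpace 𝕜 H]

lemma Submodule.continuous_starProjection_comp_of_weakly_continuous {X : Type*}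
    [TopologicalSpace X] (K : Submodule 𝕜 H) [FiniteDimensional 𝕜 K] {f : X → H}
    (hf : ∀ v, Continuous fun x => ⟪v, f x⟫_𝕜) :
    Continuous fun x => K.starProjection (f x) := by
  simp only [(stdOrthonormalBasis 𝕜 K).starProjection_eq_sum_rankOne,
    FunLike.coe_sum, Finset.sum_apply, InnerProductSpace.rankOne_apply]
  exact continuous_finsetSum _ fun i _ => (hf _).smul continuous_const

lemma exists_monotone_finiteDimensional_topologicalClosure_iSup_eq_top
    [TopologicalSpace.SeparableSpace H] :
    ∃ V : ℕ → Submodule 𝕜 H, Monotone V ∧ (∀ n, FiniteDimensional 𝕜 (V n)) ∧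
      (⨆ n, V n).topologicalClosure = ⊤ := by
  obtain ⟨u, hu⟩ := TopologicalSpace.exists_dense_seq H
  refine ⟨fun n => Submodule.span 𝕜 (u '' Iic n),
    fun m n hmn => Submodule.span_mono (image_mono (Iic_subset_Iic.2 hmn)),
    fun n => FiniteDimensional.span_of_finite 𝕜 ((finite_Iic n).image u), ?_⟩
  rw [← Submodule.dense_iff_topologicalClosure_eq_top]
  refine hu.mono (range_subset_iff.2 fun m => ?_)
  exact Submodule.mem_iSup_of_mem m (Submodule.subset_span ⟨m, self_mem_Iic, rfl⟩)

lemma exists_continuous_tendsto_of_weakly_continuous [TopologicalSpace.SeparableSpace H]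
    {X : Type*} [TopologicalSpace X] {f : X → H}
    (hf : ∀ v, Continuous fun x => ⟪v, f x⟫_𝕜) :
    ∃ g : ℕ → X → H, (∀ n, Continuous (g n)) ∧ ∀ x, Tendsto (g · x) atTop (𝓝 (f x)) := by
  obtain ⟨V, hmono, hfin, hdense⟩ :=
    exists_monotone_finiteDimensional_topologicalClosure_iSup_eq_top (𝕜 := 𝕜) (H := H)
  exact ⟨fun n x => (V n).starProjection (f x),
    fun n => (V n).continuous_starProjection_comp_of_weakly_continuous hf,
    fun x => Submodule.starProjection_tendsto_self V hmono (f x) hdense.ge⟩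

end FiniteRankApproximation

theorem continuity_points_of_weakly_continuous_dense_Gdelta_general
    {X H : Type*} [MetricSpace X] [CompactSpace X]
    [NormedAddCommGroup H] [InnerProductSpace ℝ H]
    [TopologicalSpace.SeparableSpace H]
    (f : X → H) (hweak : ∀ v : H, Continuous fun x => ⟪v, f x⟫_ℝ) :
    Dense {x : X | ContinuousAt f x} ∧ IsGδ {x : X | ContinuousAt f x} := by
  obtain ⟨g, hg, hlim⟩ := exists_continuous_tendsto_of_weakly_continuous hweak
  exact ⟨dense_setOf_continuousAt_of_tendsto hg hlim, IsGδ.setOfPred_continuousAt f⟩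

/-- The set of points of norm-continuity of a weakly continuous function from a compact
metrizable space to a separable Hilbert space is a dense Gδ. -/
theorem continuity_points_of_weakly_continuous_dense_Gdelta
    {X H : Type*} [MetricSpace X] [CompactSpace X]
    [NormedAddCommGroup H] [InnerProductSpace ℝ H] [CompleteSpace H]
    [TopologicalSpace.SeparableSpace H]
    (f : X → H) (hweak : ∀ v : H, Continuous fun x => ⟪v, f x⟫_ℝ) :
    Dense {x : X | ContinuousAt f x} ∧ IsGδ {x : X | ContinuousAt f x} :=
  continuity_points_of_weakly_continuous_dense_Gdelta_general f hweak
end
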